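/- The operator A is densely defined, and its Hilbert-space adjoint is exactly the operator with domain D* and action A*: for g, h ∈ L²(ℝ), one has ⟨Af, g⟩ = ⟨f, h⟩ for all f ∈ D(A) if and only if g ∈ D* and h = A*g, where A*g = (x ↦ x g(x) − c_g) + ⟨g, ψ⟩φ. -/

import Mathlib

open MeasureTheory Filter

/-- The (paper-convention) `L²(ℝ)` inner product `⟨f,g⟩ = ∫ f · conj g`,
linear in the first argument. -/
noncomputable def ip (f g : ℝ → ℂ) : ℂ :=
  ∫ x : ℝ, f x * (starRingEnd ℂ) (g x)

/-- The boundary operator `Γ₁`, evaluated on `g ∈ D*` with associated constant `c = c_g`: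
`Γ₁ g = ∫_ℝ ( g(x) − c·sign(x)·(x²+1)^{−1/2} ) dx`. -/
noncomputable def Gam1 (g : ℝ → ℂ) (c : ℂ) : ℂ :=
  ∫ x : ℝ, (g x - c * ((Real.sign x : ℝ) : ℂ) * (((Real.sqrt (x ^ 2 + 1) : ℝ) : ℂ))⁻¹)

/-- The domain `D(A)` of the Friedrichs-model minimal operator. -/
def DomA : Set (Lp ℂ 2 (volume : Measure ℝ)) :=
  {f | MemLp (fun x : ℝ => (x : ℂ) * f x) 2 (volume : Measure ℝ) ∧
    Tendsto (fun R : ℝ => ∫ x in (-R)..R, f x) atTop (nhds 0)}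

/-!
The bounded rank-one term `⟨f, φ⟩ψ` passes to the other side of the pairing as `⟨g, ψ⟩φ`, so it
suffices to compute the adjoint of multiplication by `x` on `D(A)`, with `h` replaced by
`k = h - ⟨g, ψ⟩φ`. Since `(1 + x²)⁻¹` is integrable, `f, x f ∈ L²` forces `f ∈ L¹`; so `D(A)` is
the set of such `f` with `∫ f = 0`, and `⟨x f, g⟩ - ⟨f, x g - c⟩ = c̄ ∫ f` vanishes on it.
Conversely, testing with `q - (∫ q) χ`, where `χ` is a box of mass one, shows that `x ḡ - k̄`
pairs with every smooth compactly supported function like a constant, hence is a.e. constant.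
For density, subtracting from a compactly supported `u` the box `(∫ u) L⁻¹ 𝟙_(0,L]`, of `L²` norm
`|∫ u| L^(-1/2)`, gives elements of `D(A)` that converge to `u` as `L → ∞`.
-/

open Topology ComplexConjugate

section InnerProduct

variable {f f₁ f₂ g g₁ g₂ : ℝ → ℂ}

lemma integrable_mul_conj (hf : MemLp f 2 volume) (hg : MemLp g 2 volume) :
    Integrable (fun x => f x * conj (g x)) volume :=
  hf.integrable_mul hg.star

lemma ip_congr_ae (hf : f₁ =ᵐ[volume] f₂) (hg : g₁ =ᵐ[volume] g₂) : ip f₁ g₁ = ip f₂ g₂ :=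
  integral_congr_ae <| by filter_upwards [hf, hg] with x hfx hgx; rw [hfx, hgx]

lemma conj_ip (f g : ℝ → ℂ) : conj (ip f g) = ip g f := by
  rw [ip, ip, ← integral_conj]
  simp only [map_mul, Complex.conj_conj, mul_comm]

lemma ip_const_mul_left (c : ℂ) (f g : ℝ → ℂ) : ip (fun x => c * f x) g = c * ip f g := by
  simp only [ip, mul_assoc, integral_const_mul]

lemma ip_const_mul_right (c : ℂ) (f g : ℝ → ℂ) : ip f (fun x => c * g x) = conj c * ip f g := by
  simp only [ip, map_mul, mul_left_comm _ (conj c), integral_const_mul]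

lemma ip_add_left (hf₁ : MemLp f₁ 2 volume) (hf₂ : MemLp f₂ 2 volume) (hg : MemLp g 2 volume) :
    ip (fun x => f₁ x + f₂ x) g = ip f₁ g + ip f₂ g := by
  simp only [ip, add_mul]
  exact integral_add (integrable_mul_conj hf₁ hg) (integrable_mul_conj hf₂ hg)

lemma ip_sub_left (hf₁ : MemLp f₁ 2 volume) (hf₂ : MemLp f₂ 2 volume) (hg : MemLp g 2 volume) :
    ip (fun x => f₁ x - f₂ x) g = ip f₁ g - ip f₂ g := by
  simp only [ip, sub_mul]
  exact integral_sub (integrable_mul_conj hf₁ hg) (integrable_mul_conj hf₂ hg)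

lemma ip_sub_right (hf : MemLp f 2 volume) (hg₁ : MemLp g₁ 2 volume) (hg₂ : MemLp g₂ 2 volume) :
    ip f (fun x => g₁ x - g₂ x) = ip f g₁ - ip f g₂ := by
  simp only [ip, map_sub, mul_sub]
  exact integral_sub (integrable_mul_conj hf hg₁) (integrable_mul_conj hf hg₂)

end InnerProduct

section Domain

variable {f : ℝ → ℂ}

lemma integrable_of_memLp_two_of_memLp_two_mul_id (hf : MemLp f 2 volume)
    (hxf : MemLp (fun x : ℝ => (x : ℂ) * f x) 2 volume) : Integrable f volume := by
  have hf2 := (memLp_two_iff_integrable_sq_norm hf.1).1 hf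
  have hxf2 := (memLp_two_iff_integrable_sq_norm hxf.1).1 hxf
  refine (((hf2.add hxf2).add integrable_inv_one_add_sq).div_const 2).mono' hf.1
    (Eventually.of_forall fun x => ?_)
  set t := 1 + x ^ 2
  have ht : 0 < t := by positivity
  have hamgm : 2 * ‖f x‖ ≤ t * ‖f x‖ ^ 2 + t⁻¹ := by
    have hsq : t * ‖f x‖ ^ 2 + t⁻¹ - 2 * ‖f x‖ = (t * ‖f x‖ - 1) ^ 2 / t := by
      field_simp; ring
    have : 0 ≤ (t * ‖f x‖ - 1) ^ 2 / t := by positivity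
    linarith
  show ‖f x‖ ≤ (‖f x‖ ^ 2 + ‖(x : ℂ) * f x‖ ^ 2 + t⁻¹) / 2
  rw [norm_mul, Complex.norm_real, mul_pow, Real.norm_eq_abs, sq_abs]
  linarith

lemma integral_eq_zero_of_mem_domA {f : Lp ℂ 2 (volume : Measure ℝ)} (hf : f ∈ DomA) :
    ∫ x, f x = 0 :=
  tendsto_nhds_unique (intervalIntegral_tendsto_integral
    (integrable_of_memLp_two_of_memLp_two_mul_id (Lp.memLp f) hf.1)
    tendsto_neg_atTop_atBot tendsto_id) hf.2

lemma toLp_mem_domA (hf : MemLp f 2 volume) (hxf : MemLp (fun x : ℝ => (x : ℂ) * f x) 2 volume)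
    (h0 : ∫ x, f x = 0) : hf.toLp f ∈ DomA := by
  have hcoe : hf.toLp f =ᵐ[volume] f := hf.coeFn_toLp
  refine ⟨hxf.ae_eq (hcoe.mono fun x hx => by simp only [hx]), ?_⟩
  have hlim := intervalIntegral_tendsto_integral
    (integrable_of_memLp_two_of_memLp_two_mul_id hf hxf) tendsto_neg_atTop_atBot tendsto_id
  rw [h0] at hlim
  exact hlim.congr fun R => intervalIntegral.integral_congr_ae (hcoe.mono fun x hx _ => hx.symm)

end Domain

noncomputable def normalizedBox (L : ℝ) : ℝ → ℂ :=
  (Set.Ioc 0 L).indicator fun _ => ((L⁻¹ : ℝ) : ℂ)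

lemma memLp_normalizedBox (L : ℝ) : MemLp (normalizedBox L) 2 volume :=
  memLp_indicator_const 2 measurableSet_Ioc _ (Or.inr measure_Ioc_lt_top.ne)

lemma memLp_mul_id_normalizedBox (L : ℝ) :
    MemLp (fun x : ℝ => (x : ℂ) * normalizedBox L x) 2 volume := by
  refine (memLp_normalizedBox L).of_le_mul (c := |L|)
    ((Complex.continuous_ofReal.aestronglyMeasurable).mul (memLp_normalizedBox L).1)
    (Eventually.of_forall fun x => ?_)
  by_cases hx : x ∈ Set.Ioc 0 L
  · rw [norm_mul, Complex.norm_real, Real.norm_eq_abs, abs_of_pos hx.1]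
    exact mul_le_mul_of_nonneg_right (hx.2.trans (le_abs_self L)) (norm_nonneg _)
  · simp [normalizedBox, hx]

lemma integral_normalizedBox {L : ℝ} (hL : 0 < L) : ∫ x, normalizedBox L x = 1 := by
  rw [normalizedBox, integral_indicator_const _ measurableSet_Ioc, Real.volume_real_Ioc_of_le hL.le,
    sub_zero, Complex.real_smul, ← Complex.ofReal_mul, mul_inv_cancel₀ hL.ne', Complex.ofReal_one]

lemma tendsto_norm_toLp_normalizedBox :
    Tendsto (fun L => ‖(memLp_normalizedBox L).toLp (normalizedBox L)‖) atTop (𝓝 0) := by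
  refine (tendsto_rpow_neg_atTop (by norm_num : (0 : ℝ) < 1 / 2)).congr' ?_
  filter_upwards [eventually_gt_atTop 0] with L hL
  change _ = ‖indicatorConstLp 2 measurableSet_Ioc measure_Ioc_lt_top.ne _‖
  rw [norm_indicatorConstLp two_ne_zero ENNReal.ofNat_ne_top, Complex.norm_real,
    Real.norm_of_nonneg (inv_nonneg.2 hL.le), Real.volume_real_Ioc_of_le hL.le, sub_zero,
    ← Real.rpow_neg_one, ← Real.rpow_add hL]
  norm_num

lemma memLp_mul_id_of_continuous_of_hasCompactSupport {u : ℝ → ℂ} (hu : Continuous u)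
    (hsupp : HasCompactSupport u) : MemLp (fun x : ℝ => (x : ℂ) * u x) 2 volume :=
  (Complex.continuous_ofReal.mul hu).memLp_of_hasCompactSupport hsupp.mul_left

lemma toLp_mem_closure_domA {u : ℝ → ℂ} (hu : MemLp u 2 volume)
    (hxu : MemLp (fun x : ℝ => (x : ℂ) * u x) 2 volume) : hu.toLp u ∈ closure DomA := by
  set m := ∫ x, u x
  have hbox := tendsto_norm_toLp_normalizedBox
  rw [← tendsto_zero_iff_norm_tendsto_zero] at hbox
  have hlim : Tendsto (fun L => hu.toLp u - m • (memLp_normalizedBox L).toLp (normalizedBox L))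
      atTop (𝓝 (hu.toLp u)) := by
    simpa using tendsto_const_nhds.sub (hbox.const_smul m)
  refine mem_closure_of_tendsto hlim ?_
  filter_upwards [eventually_gt_atTop 0] with L hL
  have hv := hu.sub ((memLp_normalizedBox L).const_smul m)
  rw [← MemLp.toLp_const_smul, ← MemLp.toLp_sub]
  refine toLp_mem_domA hv ((hxu.sub ((memLp_mul_id_normalizedBox L).const_mul m)).ae_eq
    (Eventually.of_forall fun x => by simp only [Pi.sub_apply, Pi.smul_apply, smul_eq_mul]; ring)) ?_
  simp only [Pi.sub_apply, Pi.smul_apply, smul_eq_mul]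
  rw [integral_sub (integrable_of_memLp_two_of_memLp_two_mul_id hu hxu)
    ((integrable_of_memLp_two_of_memLp_two_mul_id (memLp_normalizedBox L)
      (memLp_mul_id_normalizedBox L)).const_mul m),
    integral_const_mul, integral_normalizedBox hL, mul_one, sub_self]

lemma dense_domA : Dense DomA := by
  intro F
  rw [← closure_closure, Metric.mem_closure_iff]
  intro ε hε
  obtain ⟨u, hsupp, hdist, hcont, hu⟩ := (Lp.memLp F).exists_hasCompactSupport_eLpNorm_sub_le
    ENNReal.ofNat_ne_top (ε := ENNReal.ofReal (ε / 2)) (by simpa using hε)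
  refine ⟨hu.toLp u, toLp_mem_closure_domA hu
    (memLp_mul_id_of_continuous_of_hasCompactSupport hcont hsupp), ?_⟩
  rw [Lp.dist_def, eLpNorm_congr_ae ((EventuallyEq.refl _ _).sub hu.coeFn_toLp)]
  calc (eLpNorm (⇑F - u) 2 volume).toReal ≤ ε / 2 :=
        ENNReal.toReal_le_of_le_ofReal (by positivity) hdist
    _ < ε := by linarith

section MultiplicationOperator

variable {g k : ℝ → ℂ}

lemma MeasureTheory.LocallyIntegrable.ofReal_mul {u : ℝ → ℂ} (hu : LocallyIntegrable u volume) :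
    LocallyIntegrable (fun x : ℝ => (x : ℂ) * u x) volume :=
  (locallyIntegrable_iff).2 fun _ hK =>
    IntegrableOn.continuousOn_mul Complex.continuous_ofReal.continuousOn
      (hu.integrableOn_isCompact hK) hK

lemma ip_mul_id_eq_of_mem_domA (hg : MemLp g 2 volume) (hk : MemLp k 2 volume) {c : ℂ}
    (hkc : k =ᵐ[volume] fun x : ℝ => (x : ℂ) * g x - c) {f : Lp ℂ 2 (volume : Measure ℝ)}
    (hf : f ∈ DomA) : ip (fun x : ℝ => (x : ℂ) * f x) g = ip f k := by
  rw [ip_congr_ae (EventuallyEq.refl _ _) hkc, ip, ip, ← sub_eq_zero,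
    ← integral_sub (integrable_mul_conj hf.1 hg) (integrable_mul_conj (Lp.memLp f) (hk.ae_eq hkc))]
  calc ∫ x : ℝ, ((x : ℂ) * f x * conj (g x) - f x * conj ((x : ℂ) * g x - c))
      = ∫ x : ℝ, f x * conj c := by
        congr 1 with x
        simp only [map_sub, map_mul, Complex.conj_ofReal]
        ring
    _ = 0 := by rw [integral_mul_const, integral_eq_zero_of_mem_domA hf, zero_mul]

lemma ip_mul_id_eq_of_forall_mem_domA
    (H : ∀ f ∈ DomA, ip (fun x : ℝ => (x : ℂ) * f x) g = ip f k) {q : ℝ → ℂ}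
    (hq : MemLp q 2 volume) (hxq : MemLp (fun x : ℝ => (x : ℂ) * q x) 2 volume)
    (h0 : ∫ x, q x = 0) : ip (fun x : ℝ => (x : ℂ) * q x) g = ip q k := by
  have hcoe := hq.coeFn_toLp
  have hxcoe : (fun x : ℝ => (x : ℂ) * hq.toLp q x) =ᵐ[volume] fun x : ℝ => (x : ℂ) * q x :=
    hcoe.mono fun x hx => by simp only [hx]
  rw [← ip_congr_ae hxcoe (EventuallyEq.refl _ g), ← ip_congr_ae hcoe (EventuallyEq.refl _ k)]
  exact H _ (toLp_mem_domA hq hxq h0)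

lemma ip_mul_id_sub_ip_eq_integral_mul (hg : MemLp g 2 volume) (hk : MemLp k 2 volume)
    (H : ∀ f ∈ DomA, ip (fun x : ℝ => (x : ℂ) * f x) g = ip f k) {q : ℝ → ℂ}
    (hq : MemLp q 2 volume) (hxq : MemLp (fun x : ℝ => (x : ℂ) * q x) 2 volume) :
    ip (fun x : ℝ => (x : ℂ) * q x) g - ip q k = (∫ x, q x) *
      (ip (fun x : ℝ => (x : ℂ) * normalizedBox 1 x) g - ip (normalizedBox 1) k) := by
  set m := ∫ x, q x
  have hχ := memLp_normalizedBox 1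
  have hxχ := memLp_mul_id_normalizedBox 1
  have hv : MemLp (fun x => q x - m * normalizedBox 1 x) 2 volume := hq.sub (hχ.const_mul m)
  have hxv : MemLp (fun x : ℝ => (x : ℂ) * q x - m * ((x : ℂ) * normalizedBox 1 x)) 2 volume :=
    hxq.sub (hxχ.const_mul m)
  have h0 : ∫ x, (q x - m * normalizedBox 1 x) = 0 := by
    rw [integral_sub (integrable_of_memLp_two_of_memLp_two_mul_id hq hxq)
      ((integrable_of_memLp_two_of_memLp_two_mul_id hχ hxχ).const_mul m), integral_const_mul,
      integral_normalizedBox one_pos, mul_one, sub_self]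
  have hmul : (fun x : ℝ => (x : ℂ) * (q x - m * normalizedBox 1 x)) =
      fun x : ℝ => (x : ℂ) * q x - m * ((x : ℂ) * normalizedBox 1 x) := by
    ext x; ring
  have key := ip_mul_id_eq_of_forall_mem_domA H hv (hmul ▸ hxv) h0
  rw [hmul, ip_sub_left hxq (hxχ.const_mul m) hg, ip_sub_left hq (hχ.const_mul m) hk,
    ip_const_mul_left, ip_const_mul_left] at key
  linear_combination key

lemma exists_ae_eq_mul_id_sub_const (hg : MemLp g 2 volume) (hk : MemLp k 2 volume)
    (H : ∀ f ∈ DomA, ip (fun x : ℝ => (x : ℂ) * f x) g = ip f k) :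
    ∃ c : ℂ, k =ᵐ[volume] fun x : ℝ => (x : ℂ) * g x - c := by
  set K := ip (fun x : ℝ => (x : ℂ) * normalizedBox 1 x) g - ip (normalizedBox 1) k
  set W : ℝ → ℂ := fun x => (x : ℂ) * conj (g x) - conj (k x)
  have hW : LocallyIntegrable W volume :=
    (hg.star.locallyIntegrable one_le_two).ofReal_mul.sub (hk.star.locallyIntegrable one_le_two)
  have hWK : ∀ᵐ x ∂volume, W x = K := by
    refine ae_eq_of_integral_contDiff_smul_eq hW (locallyIntegrable_const K)
      fun φ₀ hφ₀ hsupp => ?_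
    set q : ℝ → ℂ := fun x => (φ₀ x : ℂ)
    have hqc : Continuous q := Complex.continuous_ofReal.comp hφ₀.continuous
    have hqs : HasCompactSupport q := hsupp.comp_left Complex.ofReal_zero
    have hq : MemLp q 2 volume := hqc.memLp_of_hasCompactSupport hqs
    have hxq := memLp_mul_id_of_continuous_of_hasCompactSupport hqc hqs
    calc ∫ x, φ₀ x • W x
        = ip (fun x : ℝ => (x : ℂ) * q x) g - ip q k := by
          rw [ip, ip, ← integral_sub (integrable_mul_conj hxq hg) (integrable_mul_conj hq hk)]
          congr 1 with x
          simp only [W, q, Complex.real_smul]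
          ring
      _ = (∫ x, q x) * K := ip_mul_id_sub_ip_eq_integral_mul hg hk H hq hxq
      _ = ∫ x, φ₀ x • K := by
          rw [integral_smul_const, integral_complex_ofReal, Complex.real_smul]
  refine ⟨conj K, hWK.mono fun x hx => ?_⟩
  have := congrArg conj hx
  simp only [W, map_sub, map_mul, Complex.conj_ofReal, Complex.conj_conj] at this
  linear_combination -this

lemma forall_mem_domA_ip_mul_id_eq_iff (hg : MemLp g 2 volume)
    (hk : MemLp k 2 volume) :
    (∀ f ∈ DomA, ip (fun x : ℝ => (x : ℂ) * f x) g = ip f k) ↔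
      ∃ c : ℂ, k =ᵐ[volume] fun x : ℝ => (x : ℂ) * g x - c :=
  ⟨exists_ae_eq_mul_id_sub_const hg hk,
    fun ⟨_, hkc⟩ _ hf => ip_mul_id_eq_of_mem_domA hg hk hkc hf⟩

end MultiplicationOperator

lemma ip_add_rankOne_eq_iff {φ ψ : ℝ → ℂ} (hφ : MemLp φ 2 volume) (hψ : MemLp ψ 2 volume)
    {f : Lp ℂ 2 (volume : Measure ℝ)} (hxf : MemLp (fun x : ℝ => (x : ℂ) * f x) 2 volume)
    (g h : Lp ℂ 2 (volume : Measure ℝ)) :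
    ip (fun x : ℝ => (x : ℂ) * f x + ip f φ * ψ x) g = ip f h ↔
      ip (fun x : ℝ => (x : ℂ) * f x) g = ip f fun x => h x - ip g ψ * φ x := by
  rw [ip_add_left hxf (hψ.const_mul _) (Lp.memLp g), ip_const_mul_left,
    ip_sub_right (Lp.memLp f) (Lp.memLp h) (hφ.const_mul _), ip_const_mul_right, conj_ip]
  constructor <;> intro hfg <;> linear_combination hfg

theorem stmt12 (φ ψ : ℝ → ℂ)
    (hφ : MemLp φ 2 (volume : Measure ℝ)) (hψ : MemLp ψ 2 (volume : Measure ℝ)) :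
    -- `A` is densely defined
    Dense DomA ∧
    -- and its adjoint is exactly `(D*, A*)`
    ∀ g h : Lp ℂ 2 (volume : Measure ℝ),
      ((∀ f ∈ DomA,
          ip (fun x : ℝ => (x : ℂ) * f x + ip (⇑f) φ * ψ x) (⇑g) = ip (⇑f) (⇑h)) ↔
        (∃ c : ℂ, MemLp (fun x : ℝ => (x : ℂ) * g x - c) 2 (volume : Measure ℝ) ∧
          (h : ℝ → ℂ) =ᵐ[(volume : Measure ℝ)]
            fun x : ℝ => ((x : ℂ) * g x - c) + ip (⇑g) ψ * φ x)) := by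
  refine ⟨dense_domA, fun g h => ?_⟩
  set k : ℝ → ℂ := fun x => h x - ip g ψ * φ x
  have hk : MemLp k 2 volume := (Lp.memLp h).sub (hφ.const_mul _)
  calc _ ↔ ∀ f ∈ DomA, ip (fun x : ℝ => (x : ℂ) * f x) g = ip f k :=
        forall₂_congr fun f hf => ip_add_rankOne_eq_iff hφ hψ hf.1 g h
    _ ↔ ∃ c : ℂ, k =ᵐ[volume] fun x : ℝ => (x : ℂ) * g x - c :=
        forall_mem_domA_ip_mul_id_eq_iff (Lp.memLp g) hk
    _ ↔ _ := by
        refine exists_congr fun c => ⟨fun hkc => ⟨hk.ae_eq hkc, ?_⟩, fun ⟨_, hhc⟩ => ?_⟩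
        · filter_upwards [hkc] with x hx
          linear_combination hx
        · filter_upwards [hhc] with x hx
          linear_combination hx
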